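/- If φ1 and φ2 are ⩕-formulas (over a countable language τ), then the disjunction φ1 ∨ φ2 is logically equivalent to a ⩕-formula with the same free variables. -/

import Mathlib

universe u

open FirstOrder Language

namespace PaperCDH

variable {L : FirstOrder.Language.{u, u}}

/-- Infinitary `L_{ω₁ω}`-style formulas with free and bound variables indexed by `ℕ`,
including finitary connectives and countably infinite conjunctions and disjunctions. -/
inductive Linf (L : FirstOrder.Language.{u, u}) : Type u where
  | fls : Linf L
  | equal : L.Term ℕ → L.Term ℕ → Linf L
  | rel : {n : ℕ} → L.Relations n → (Fin n → L.Term ℕ) → Linf L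
  | not : Linf L → Linf L
  | and : Linf L → Linf L → Linf L
  | or : Linf L → Linf L → Linf L
  | ex : ℕ → Linf L → Linf L
  | all : ℕ → Linf L → Linf L
  | iConj : (ℕ → Linf L) → Linf L
  | iDisj : (ℕ → Linf L) → Linf L

namespace Linf

/-- The set of free variables of an infinitary formula. -/
def freeVars : Linf L → Set ℕ
  | .fls => ∅
  | .equal t u => ↑(t.varFinset ∪ u.varFinset)
  | .rel _ ts => ⋃ i, ↑((ts i).varFinset)
  | .not φ => φ.freeVars
  | .and φ ψ => φ.freeVars ∪ ψ.freeVars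
  | .or φ ψ => φ.freeVars ∪ ψ.freeVars
  | .ex i φ => φ.freeVars \ {i}
  | .all i φ => φ.freeVars \ {i}
  | .iConj f => ⋃ n, (f n).freeVars
  | .iDisj f => ⋃ n, (f n).freeVars

/-- Satisfaction of an infinitary formula in an `L`-structure, relative to a
valuation of the variables. -/
def Realize {M : Type u} [L.Structure M] : Linf L → (ℕ → M) → Prop
  | .fls, _ => False
  | .equal t u, v => t.realize v = u.realize v
  | .rel R ts, v => Structure.RelMap R fun i => (ts i).realize v
  | .not φ, v => ¬ φ.Realize v
  | .and φ ψ, v => φ.Realize v ∧ ψ.Realize v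
  | .or φ ψ, v => φ.Realize v ∨ ψ.Realize v
  | .ex i φ, v => ∃ a : M, φ.Realize (Function.update v i a)
  | .all i φ, v => ∀ a : M, φ.Realize (Function.update v i a)
  | .iConj f, v => ∀ n, (f n).Realize v
  | .iDisj f, v => ∃ n, (f n).Realize v

/-- A (nonempty) structure satisfies a sentence if it is realized under every
(equivalently, some) valuation. -/
def Sat (M : Type u) [L.Structure M] (φ : Linf L) : Prop :=
  ∀ v : ℕ → M, φ.Realize v

/-- Well-formed `L_{ω₁ω}`-formulas: at each infinitary conjunction or disjunction, the
conjuncts/disjuncts have finitely many free variables in total. -/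
inductive WF : Linf L → Prop
  | fls : WF .fls
  | equal (t u : L.Term ℕ) : WF (.equal t u)
  | rel {n : ℕ} (R : L.Relations n) (ts : Fin n → L.Term ℕ) : WF (.rel R ts)
  | not {φ} : WF φ → WF (.not φ)
  | and {φ ψ} : WF φ → WF ψ → WF (.and φ ψ)
  | or {φ ψ} : WF φ → WF ψ → WF (.or φ ψ)
  | ex {φ} (i : ℕ) : WF φ → WF (.ex i φ)
  | all {φ} (i : ℕ) : WF φ → WF (.all i φ)
  | iConj {f : ℕ → Linf L} : (∀ n, WF (f n)) → (⋃ n, (f n).freeVars).Finite → WF (.iConj f)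
  | iDisj {f : ℕ → Linf L} : (∀ n, WF (f n)) → (⋃ n, (f n).freeVars).Finite → WF (.iDisj f)

/-- Finitary quantifier-free formulas. -/
inductive QF : Linf L → Prop
  | fls : QF .fls
  | equal (t u : L.Term ℕ) : QF (.equal t u)
  | rel {n : ℕ} (R : L.Relations n) (ts : Fin n → L.Term ℕ) : QF (.rel R ts)
  | not {φ} : QF φ → QF (.not φ)
  | and {φ ψ} : QF φ → QF ψ → QF (.and φ ψ)
  | or {φ ψ} : QF φ → QF ψ → QF (.or φ ψ)

/-- The `⩕`-formulas: built from finitary quantifier-free formulas by quantification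
and countable conjunctions (of families with finitely many free variables in total),
with no infinitary disjunctions. -/
inductive IsWedge : Linf L → Prop
  | qf {φ} : QF φ → IsWedge φ
  | ex {φ} (i : ℕ) : IsWedge φ → IsWedge (.ex i φ)
  | all {φ} (i : ℕ) : IsWedge φ → IsWedge (.all i φ)
  | iConj {f : ℕ → Linf L} : (∀ n, IsWedge (f n)) → (⋃ n, (f n).freeVars).Finite →
      IsWedge (.iConj f)

end Linf

/-- A class of `L`-structures (in universe `u`), given as a predicate on structures. -/
def StructClass (L : FirstOrder.Language.{u, u}) : Type (u + 1) :=
  ∀ (M : Type u), L.Structure M → Prop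

/-- A class of structures is closed under isomorphism. -/
def ClosedUnderIso (K : StructClass L) : Prop :=
  ∀ (M N : Type u) (iM : L.Structure M) (iN : L.Structure N),
    Nonempty M → Nonempty (@FirstOrder.Language.Equiv L M N iM iN) → (K M iM ↔ K N iN)

/-- `K` is the class of all models of the `L_{ω₁ω}`-sentence `φ`
(among nonempty structures). -/
def Axiomatizes (φ : Linf L) (K : StructClass L) : Prop :=
  φ.WF ∧ φ.freeVars = ∅ ∧
    ∀ (M : Type u) (iM : L.Structure M), Nonempty M → (K M iM ↔ @Linf.Sat L M iM φ)

/-- `K` is `L_{ω₁ω}`-elementary: the class of all models of a single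
`L_{ω₁ω}`-sentence. -/
def IsLw1wElementary (K : StructClass L) : Prop :=
  ∃ φ : Linf L, Axiomatizes φ K

/-- `K` is the class of all models of a single `⩕`-sentence. -/
def IsWedgeElementary (K : StructClass L) : Prop :=
  ∃ φ : Linf L, φ.IsWedge ∧ φ.freeVars = ∅ ∧
    ∀ (M : Type u) (iM : L.Structure M), Nonempty M → (K M iM ↔ @Linf.Sat L M iM φ)

/-- `K` is a `PC_Δ`-class: there is an expansion `L.sum L'` of the language by (countably
many) new symbols and a first-order theory `T` in the expanded language such that the
members of `K` are exactly the structures admitting an expansion to a model of `T`. -/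
def IsPCDelta (K : StructClass L) : Prop :=
  ∃ (L' : FirstOrder.Language.{u, u}), Countable L'.Symbols ∧
    ∃ T : (L.sum L').Theory,
      ∀ (M : Type u) (iM : L.Structure M), Nonempty M →
        (K M iM ↔ ∃ iM' : L'.Structure M,
          @Theory.Model (L.sum L') M (@FirstOrder.Language.sumStructure L L' M iM iM') T)

/-- `K` is a `PC`-class: as `IsPCDelta`, but with a single first-order sentence. -/
def IsPC (K : StructClass L) : Prop :=
  ∃ (L' : FirstOrder.Language.{u, u}), Countable L'.Symbols ∧
    ∃ φ : (L.sum L').Sentence,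
      ∀ (M : Type u) (iM : L.Structure M), Nonempty M →
        (K M iM ↔ ∃ iM' : L'.Structure M,
          @Sentence.Realize (L.sum L') M (@FirstOrder.Language.sumStructure L L' M iM iM') φ)

/-- The members of `K` are (up to isomorphism) exactly the structures of the form `A_P`:
the substructure of the `L`-reduct of `A` whose domain is the interpretation of the unary
predicate `P`, where `A` ranges over models of `T` for which this set is closed under the
interpretations of the function and constant symbols of `L`. -/
def PCPrimeWitness (L' : FirstOrder.Language.{u, u}) (P : L'.Relations 1)
    (T : Set ((L.sum L').Sentence)) (K : StructClass L) : Prop :=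
  ∀ (M : Type u) (iM : L.Structure M), Nonempty M →
    (K M iM ↔ ∃ (A : Type u) (iA : (L.sum L').Structure A),
      @Theory.Model (L.sum L') A iA T ∧
      ∃ S : @Substructure L A (@LHom.reduct L (L.sum L') LHom.sumInl A iA),
        ((S : Set A) = {a | @Structure.RelMap (L.sum L') A iA 1 (Sum.inr P) ![a]}) ∧
        Nonempty (@FirstOrder.Language.Equiv L M S iM
          (@Substructure.inducedStructure L A (@LHom.reduct L (L.sum L') LHom.sumInl A iA) S)))

/-- `K` is a `PC'_Δ`-class. -/
def IsPCDelta' (K : StructClass L) : Prop :=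
  ∃ (L' : FirstOrder.Language.{u, u}), Countable L'.Symbols ∧
    ∃ (P : L'.Relations 1) (T : (L.sum L').Theory), PCPrimeWitness L' P T K

/-- `K` is a `PC'`-class: as `IsPCDelta'` but with a single first-order sentence. -/
def IsPC' (K : StructClass L) : Prop :=
  ∃ (L' : FirstOrder.Language.{u, u}), Countable L'.Symbols ∧
    ∃ (P : L'.Relations 1) (φ : (L.sum L').Sentence), PCPrimeWitness L' P {φ} K
/-!
Disjunction commutes with the constructors of `⩕`-formulas: for `y` not free in `φ`,
`φ ∨ ∃x ψ ≡ ∃y (φ ∨ ψ[y/x])` (in nonempty structures), `φ ∨ ∀x ψ ≡ ∀y (φ ∨ ψ[y/x])`, and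
`φ ∨ ⩕ₙ ψₙ ≡ ⩕ₙ (φ ∨ ψₙ)`. Pushing the disjunction down through both disjuncts in turn leaves
disjunctions of finitary quantifier-free formulas. A fresh `y` exists because `⩕`-formulas have
finitely many free variables; as the bound variable is renamed on the way down, the induction
runs over all renamings of a formula by permutations of the variables.
-/

namespace Linf

open Set

lemma term_varFinset_relabel (σ : ℕ → ℕ) (t : L.Term ℕ) :
    (t.relabel σ).varFinset = t.varFinset.image σ := by
  induction t with
  | var i => simp
  | func f ts ih => simp [Finset.biUnion_image, ih]

lemma term_realize_congr {M : Type u} [L.Structure M] (t : L.Term ℕ) {v w : ℕ → M}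
    (h : ∀ k ∈ t.varFinset, v k = w k) : t.realize v = t.realize w := by
  induction t with
  | var i => exact h i (by simp)
  | func f ts ih =>
    simp only [Term.realize]
    congr 1
    funext i
    exact ih i fun k hk => h k (Finset.mem_biUnion.2 ⟨i, Finset.mem_univ i, hk⟩)

lemma realize_congr {M : Type u} [L.Structure M] (φ : Linf L) {v w : ℕ → M}
    (h : ∀ k ∈ φ.freeVars, v k = w k) : φ.Realize v ↔ φ.Realize w := by
  induction φ generalizing v w with
  | fls => rfl
  | equal t u =>
    simp only [freeVars, Finset.coe_union, mem_union, Finset.mem_coe] at h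
    simp only [Realize, term_realize_congr t fun k hk => h k (.inl hk),
      term_realize_congr u fun k hk => h k (.inr hk)]
  | rel R ts =>
    simp only [freeVars, mem_iUnion, Finset.mem_coe] at h
    simp only [Realize, fun i => term_realize_congr (ts i) fun k hk => h k ⟨i, hk⟩]
  | not φ ih => exact not_congr (ih h)
  | and φ ψ ih₁ ih₂ | or φ ψ ih₁ ih₂ =>
    simp only [freeVars, mem_union] at h
    simp only [Realize, ih₁ fun k hk => h k (.inl hk), ih₂ fun k hk => h k (.inr hk)]
  | ex i φ ih | all i φ ih =>
    simp only [freeVars, mem_sdiff, mem_singleton_iff] at h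
    have (a : M) : φ.Realize (Function.update v i a) ↔ φ.Realize (Function.update w i a) :=
      ih fun k hk => by
        by_cases hki : k = i
        · simp [hki]
        · simp [Function.update_of_ne hki, h k ⟨hk, hki⟩]
    simp only [Realize, this]
  | iConj f ih | iDisj f ih =>
    simp only [freeVars, mem_iUnion] at h
    simp only [Realize, fun n => ih n fun k hk => h k ⟨n, hk⟩]

lemma realize_update_of_notMem {M : Type u} [L.Structure M] {φ : Linf L} {j : ℕ}
    (hj : j ∉ φ.freeVars) (v : ℕ → M) (a : M) :
    φ.Realize (Function.update v j a) ↔ φ.Realize v :=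
  realize_congr φ fun _ hk => Function.update_of_ne (ne_of_mem_of_not_mem hk hj) a v

def ren (σ : ℕ → ℕ) : Linf L → Linf L
  | .fls => .fls
  | .equal t u => .equal (t.relabel σ) (u.relabel σ)
  | .rel R ts => .rel R fun i => (ts i).relabel σ
  | .not φ => .not (φ.ren σ)
  | .and φ ψ => .and (φ.ren σ) (ψ.ren σ)
  | .or φ ψ => .or (φ.ren σ) (ψ.ren σ)
  | .ex i φ => .ex (σ i) (φ.ren σ)
  | .all i φ => .all (σ i) (φ.ren σ)
  | .iConj f => .iConj fun n => (f n).ren σ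
  | .iDisj f => .iDisj fun n => (f n).ren σ

@[simp]
lemma ren_id (φ : Linf L) : φ.ren id = φ := by
  induction φ <;> simp_all [ren]

lemma ren_ren (σ τ : ℕ → ℕ) (φ : Linf L) : (φ.ren σ).ren τ = φ.ren (τ ∘ σ) := by
  induction φ <;> simp_all [ren, Term.relabel_relabel]

lemma freeVars_ren (σ : ℕ ≃ ℕ) (φ : Linf L) : (φ.ren σ).freeVars = σ '' φ.freeVars := by
  induction φ <;>
    simp_all [ren, freeVars, term_varFinset_relabel, image_union, image_iUnion,
      image_sdiff σ.injective]

lemma realize_ren {M : Type u} [L.Structure M] (σ : ℕ ≃ ℕ) (φ : Linf L) (v : ℕ → M) :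
    (φ.ren σ).Realize v ↔ φ.Realize (v ∘ σ) := by
  induction φ generalizing v <;>
    simp_all [ren, Realize, Term.realize_relabel,
      Function.update_comp_eq_of_injective _ σ.injective]

lemma QF.ren {φ : Linf L} (h : QF φ) (σ : ℕ → ℕ) : QF (φ.ren σ) := by
  induction h with
  | fls => exact .fls
  | equal t u => exact .equal _ _
  | rel R ts => exact .rel _ _
  | not _ ih => exact .not ih
  | and _ _ ih₁ ih₂ => exact .and ih₁ ih₂
  | or _ _ ih₁ ih₂ => exact .or ih₁ ih₂

lemma IsWedge.ren {φ : Linf L} (h : IsWedge φ) (σ : ℕ ≃ ℕ) : IsWedge (φ.ren σ) := by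
  induction h with
  | qf hq => exact .qf (hq.ren σ)
  | ex i _ ih => exact .ex (σ i) ih
  | all i _ ih => exact .all (σ i) ih
  | @iConj f _ hfin ih =>
    refine .iConj ih ?_
    simpa only [freeVars, freeVars_ren, image_iUnion] using hfin.image σ

lemma QF.finite_freeVars {φ : Linf L} (h : QF φ) : φ.freeVars.Finite := by
  induction h with
  | fls => exact finite_empty
  | equal t u => exact (t.varFinset ∪ u.varFinset).finite_toSet
  | rel R ts => exact finite_iUnion fun i => Finset.finite_toSet _
  | not _ ih => exact ih
  | and _ _ ih₁ ih₂ | or _ _ ih₁ ih₂ => exact ih₁.union ih₂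

lemma IsWedge.finite_freeVars {φ : Linf L} (h : IsWedge φ) : φ.freeVars.Finite := by
  induction h with
  | qf hq => exact hq.finite_freeVars
  | ex i _ ih | all i _ ih => exact ih.sdiff
  | iConj _ hfin _ => exact hfin

lemma freeVars_ren_swap_diff {χ : Linf L} {i j : ℕ} (hj : j ∉ χ.freeVars) :
    (χ.ren (Equiv.swap i j)).freeVars \ {j} = χ.freeVars \ {i} := by
  rw [freeVars_ren]
  ext x
  simp only [mem_sdiff, mem_image, mem_singleton_iff]
  constructor
  · rintro ⟨⟨y, hy, rfl⟩, hyj⟩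
    have hyi : y ≠ i := by rintro rfl; exact hyj (Equiv.swap_apply_left y j)
    rw [Equiv.swap_apply_of_ne_of_ne hyi (ne_of_mem_of_not_mem hy hj)]
    exact ⟨hy, hyi⟩
  · rintro ⟨hx, hxi⟩
    have hxj := ne_of_mem_of_not_mem hx hj
    exact ⟨⟨x, hx, Equiv.swap_apply_of_ne_of_ne hxi hxj⟩, hxj⟩

lemma realize_ren_swap_update {M : Type u} [L.Structure M] {χ : Linf L} {i j : ℕ}
    (hj : j ∉ χ.freeVars) (v : ℕ → M) (a : M) :
    (χ.ren (Equiv.swap i j)).Realize (Function.update v j a) ↔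
      χ.Realize (Function.update v i a) := by
  rw [realize_ren]
  refine realize_congr χ fun k hk => ?_
  have hkj := ne_of_mem_of_not_mem hk hj
  by_cases hki : k = i
  · simp [hki]
  · simp [Equiv.swap_apply_of_ne_of_ne hki hkj, Function.update_of_ne hki,
      Function.update_of_ne hkj]

def Equivalent (θ φ : Linf L) : Prop :=
  θ.freeVars = φ.freeVars ∧ ∀ (M : Type u) [L.Structure M], Nonempty M → ∀ v : ℕ → M,
    θ.Realize v ↔ φ.Realize v

namespace Equivalent

variable {φ ψ χ : Linf L}

lemma refl (φ : Linf L) : Equivalent φ φ := ⟨rfl, fun _ _ _ _ => Iff.rfl⟩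

lemma trans (h₁ : Equivalent φ ψ) (h₂ : Equivalent ψ χ) : Equivalent φ χ :=
  ⟨h₁.1.trans h₂.1, fun M _ hM v => (h₁.2 M hM v).trans (h₂.2 M hM v)⟩

lemma or_right (h : Equivalent ψ χ) : Equivalent (.or φ ψ) (.or φ χ) :=
  ⟨congrArg (φ.freeVars ∪ ·) h.1, fun M _ hM v => or_congr_right (h.2 M hM v)⟩

lemma ex (h : Equivalent φ ψ) (j : ℕ) : Equivalent (.ex j φ) (.ex j ψ) :=
  ⟨congrArg (· \ {j}) h.1, fun M _ hM _ => exists_congr fun _ => h.2 M hM _⟩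

lemma all (h : Equivalent φ ψ) (j : ℕ) : Equivalent (.all j φ) (.all j ψ) :=
  ⟨congrArg (· \ {j}) h.1, fun M _ hM _ => forall_congr' fun _ => h.2 M hM _⟩

lemma iConj {f g : ℕ → Linf L} (h : ∀ n, Equivalent (f n) (g n)) :
    Equivalent (.iConj f) (.iConj g) :=
  ⟨iUnion_congr fun n => (h n).1, fun M _ hM v => forall_congr' fun n => (h n).2 M hM v⟩

end Equivalent

section Prenex

variable {φ χ : Linf L} {j : ℕ}

lemma equivalent_ex_or (hj : j ∉ φ.freeVars) :
    Equivalent (.ex j (.or φ χ)) (.or φ (.ex j χ)) := by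
  refine ⟨?_, fun M _ _ v => ?_⟩
  · simp only [freeVars, union_sdiff_distrib, sdiff_singleton_eq_self hj]
  · simp only [Realize, realize_update_of_notMem hj, exists_or, exists_const]

lemma equivalent_all_or (hj : j ∉ φ.freeVars) :
    Equivalent (.all j (.or φ χ)) (.or φ (.all j χ)) := by
  refine ⟨?_, fun M _ _ v => ?_⟩
  · simp only [freeVars, union_sdiff_distrib, sdiff_singleton_eq_self hj]
  · simp only [Realize, realize_update_of_notMem hj, forall_or_left]

lemma equivalent_iConj_or (f : ℕ → Linf L) :
    Equivalent (.iConj fun n => .or φ (f n)) (.or φ (.iConj f)) := by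
  refine ⟨?_, fun M _ _ v => ?_⟩
  · simp only [freeVars, union_iUnion]
  · simp only [Realize, forall_or_left]

lemma equivalent_ex_ren_swap (i : ℕ) (hj : j ∉ χ.freeVars) :
    Equivalent (.ex j (χ.ren (Equiv.swap i j))) (.ex i χ) :=
  ⟨freeVars_ren_swap_diff hj, fun _ _ _ v => by
    simp only [Realize, realize_ren_swap_update hj]⟩

lemma equivalent_all_ren_swap (i : ℕ) (hj : j ∉ χ.freeVars) :
    Equivalent (.all j (χ.ren (Equiv.swap i j))) (.all i χ) :=
  ⟨freeVars_ren_swap_diff hj, fun _ _ _ v => by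
    simp only [Realize, realize_ren_swap_update hj]⟩

end Prenex

def HasWedgeEquiv (φ : Linf L) : Prop :=
  ∃ θ : Linf L, θ.IsWedge ∧ Equivalent θ φ

namespace HasWedgeEquiv

variable {φ χ : Linf L}

lemma or_comm (h : HasWedgeEquiv (.or φ χ)) : HasWedgeEquiv (.or χ φ) :=
  let ⟨θ, hθ, hθφ⟩ := h
  ⟨θ, hθ, hθφ.1.trans (union_comm _ _), fun M _ hM v => (hθφ.2 M hM v).trans Or.comm⟩

lemma or_ex (hφ : φ.freeVars.Finite) (hχ : χ.freeVars.Finite)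
    (h : ∀ τ : ℕ ≃ ℕ, HasWedgeEquiv (.or φ (χ.ren τ))) (i : ℕ) :
    HasWedgeEquiv (.or φ (.ex i χ)) := by
  obtain ⟨j, hj⟩ := (hφ.union hχ).infinite_compl.nonempty
  rw [mem_compl_iff, mem_union, not_or] at hj
  obtain ⟨θ, hθ, hθφ⟩ := h (Equiv.swap i j)
  exact ⟨.ex j θ, .ex j hθ, (hθφ.ex j).trans <| (equivalent_ex_or hj.1).trans
    (equivalent_ex_ren_swap i hj.2).or_right⟩

lemma or_all (hφ : φ.freeVars.Finite) (hχ : χ.freeVars.Finite)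
    (h : ∀ τ : ℕ ≃ ℕ, HasWedgeEquiv (.or φ (χ.ren τ))) (i : ℕ) :
    HasWedgeEquiv (.or φ (.all i χ)) := by
  obtain ⟨j, hj⟩ := (hφ.union hχ).infinite_compl.nonempty
  rw [mem_compl_iff, mem_union, not_or] at hj
  obtain ⟨θ, hθ, hθφ⟩ := h (Equiv.swap i j)
  exact ⟨.all j θ, .all j hθ, (hθφ.all j).trans <| (equivalent_all_or hj.1).trans
    (equivalent_all_ren_swap i hj.2).or_right⟩

lemma or_iConj {f : ℕ → Linf L} (hφ : φ.freeVars.Finite) (hf : (iConj f).freeVars.Finite)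
    (h : ∀ n, HasWedgeEquiv (.or φ (f n))) : HasWedgeEquiv (.or φ (.iConj f)) := by
  choose θ hθ hθf using h
  have hθφ := (Equivalent.iConj hθf).trans (equivalent_iConj_or f)
  exact ⟨.iConj θ, .iConj hθ (show (iConj θ).freeVars.Finite from hθφ.1 ▸ hφ.union hf), hθφ⟩

end HasWedgeEquiv

lemma QF.hasWedgeEquiv_or_ren {φ ψ : Linf L} (hφ : QF φ) (hψ : IsWedge ψ) (σ : ℕ ≃ ℕ) :
    HasWedgeEquiv (.or φ (ψ.ren σ)) := by
  induction hψ generalizing σ with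
  | qf hq => exact ⟨_, .qf (hφ.or (hq.ren σ)), .refl _⟩
  | ex i hψ ih =>
    refine .or_ex hφ.finite_freeVars (hψ.ren σ).finite_freeVars (fun τ => ?_) (σ i)
    simpa only [ren_ren, Equiv.coe_trans] using ih (σ.trans τ)
  | all i hψ ih =>
    refine .or_all hφ.finite_freeVars (hψ.ren σ).finite_freeVars (fun τ => ?_) (σ i)
    simpa only [ren_ren, Equiv.coe_trans] using ih (σ.trans τ)
  | iConj hf hfin ih =>
    exact .or_iConj hφ.finite_freeVars ((IsWedge.iConj hf hfin).ren σ).finite_freeVars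
      fun n => ih n σ

lemma IsWedge.hasWedgeEquiv_ren_or {φ ψ : Linf L} (hφ : IsWedge φ) (hψ : IsWedge ψ)
    (σ : ℕ ≃ ℕ) : HasWedgeEquiv (.or (φ.ren σ) ψ) := by
  induction hφ generalizing σ with
  | qf hq =>
    simpa only [Equiv.coe_refl, ren_id] using (hq.ren σ).hasWedgeEquiv_or_ren hψ (Equiv.refl ℕ)
  | ex i hφ ih =>
    refine (HasWedgeEquiv.or_ex hψ.finite_freeVars (hφ.ren σ).finite_freeVars
      (fun τ => ?_) (σ i)).or_comm
    simpa only [ren_ren, Equiv.coe_trans] using (ih (σ.trans τ)).or_comm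
  | all i hφ ih =>
    refine (HasWedgeEquiv.or_all hψ.finite_freeVars (hφ.ren σ).finite_freeVars
      (fun τ => ?_) (σ i)).or_comm
    simpa only [ren_ren, Equiv.coe_trans] using (ih (σ.trans τ)).or_comm
  | iConj hf hfin ih =>
    exact (HasWedgeEquiv.or_iConj hψ.finite_freeVars
      ((IsWedge.iConj hf hfin).ren σ).finite_freeVars fun n => (ih n σ).or_comm).or_comm

end Linf

theorem wedge_or_equiv_wedge_general {L : FirstOrder.Language.{u, u}}
    (φ₁ φ₂ : Linf L) (h₁ : φ₁.IsWedge) (h₂ : φ₂.IsWedge) :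
    ∃ θ : Linf L, θ.IsWedge ∧ θ.freeVars = (Linf.or φ₁ φ₂).freeVars ∧
      ∀ (M : Type u) (iM : L.Structure M), Nonempty M → ∀ v : ℕ → M,
        @Linf.Realize L M iM θ v ↔ @Linf.Realize L M iM (Linf.or φ₁ φ₂) v := by
  have h := h₁.hasWedgeEquiv_ren_or h₂ (Equiv.refl ℕ)
  rw [Equiv.coe_refl, Linf.ren_id] at h
  exact h

/-- If `φ₁` and `φ₂` are `⩕`-formulas (over a countable language `L`),
then the disjunction `φ₁ ∨ φ₂` is logically equivalent to a `⩕`-formula with the same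
free variables. -/
theorem wedge_or_equiv_wedge {L : FirstOrder.Language.{u, u}} [Countable L.Symbols]
    (φ₁ φ₂ : Linf L) (h₁ : φ₁.IsWedge) (h₂ : φ₂.IsWedge) :
    ∃ θ : Linf L, θ.IsWedge ∧ θ.freeVars = (Linf.or φ₁ φ₂).freeVars ∧
      ∀ (M : Type u) (iM : L.Structure M), Nonempty M → ∀ v : ℕ → M,
        @Linf.Realize L M iM θ v ↔ @Linf.Realize L M iM (Linf.or φ₁ φ₂) v :=
  wedge_or_equiv_wedge_general φ₁ φ₂ h₁ h₂

end PaperCDH
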